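/- Let M = {(x,y,z) ∈ ℝ³ : z < −1}, let μ, f, r : ℝ → ℝ be smooth with μ(z) ≠ −2 for all z < −1, set λ(z) = √(−1−z), a(x,y,z) = x(1 + λ(z)) + f(z), b(x,y,z) = y(1 − λ(z)) + r(z), c(z) = 2(1+z)(μ(z)+2), and define on M the vector fields e₁ = (1,0,0), e₂ = (0,1,0), e₃ = (a, b, −c), and the matrix-valued map φ(x,y,z) = !![0, −1, −b/c; 1, 0, a/c; 0, 0, 0]. For a vector field X on M define (hX)(p) = (1/2)·([e₃, φX](p) − φ(p)·[e₃, X](p)), where φX is the vector field p ↦ φ(p)·X(p), and define h'X = h(φX). Then at every point of M: h e₁ = λ e₂, h e₂ = λ e₁, h' e₁ = λ e₁, and h' e₂ = −λ e₂. -/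

import Mathlib

open Matrix

/-- `λ(z) = √(-1 - z)` -/
noncomputable def lam (z : ℝ) : ℝ := Real.sqrt (-1 - z)

/-- The coordinate vector field `e₁ = ∂/∂x`. -/
noncomputable def e1 : (Fin 3 → ℝ) → (Fin 3 → ℝ) := fun _ => ![1, 0, 0]

/-- The coordinate vector field `e₂ = ∂/∂y`. -/
noncomputable def e2 : (Fin 3 → ℝ) → (Fin 3 → ℝ) := fun _ => ![0, 1, 0]

/-- `a(x,y,z) = x(1 + λ(z)) + f(z)` -/
noncomputable def aFun (f : ℝ → ℝ) (p : Fin 3 → ℝ) : ℝ := p 0 * (1 + lam (p 2)) + f (p 2)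

/-- `b(x,y,z) = y(1 - λ(z)) + r(z)` -/
noncomputable def bFun (r : ℝ → ℝ) (p : Fin 3 → ℝ) : ℝ := p 1 * (1 - lam (p 2)) + r (p 2)

/-- `c(z) = 2(1+z)(μ(z)+2)` -/
noncomputable def cFun (μ : ℝ → ℝ) (z : ℝ) : ℝ := 2 * (1 + z) * (μ z + 2)

/-- The Reeb vector field `e₃ = a ∂x + b ∂y - c ∂z` of the local model of a `3`-dimensional
almost Kenmotsu generalized `(k,μ)'`-space. -/
noncomputable def e3 (μ f r : ℝ → ℝ) : (Fin 3 → ℝ) → (Fin 3 → ℝ) :=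
  fun p => ![aFun f p, bFun r p, -cFun μ (p 2)]

/-- The structure tensor `φ` of the local model. -/
noncomputable def phi (μ f r : ℝ → ℝ) (p : Fin 3 → ℝ) : Matrix (Fin 3) (Fin 3) ℝ :=
  !![0, -1, -bFun r p / cFun μ (p 2);
     1, 0, aFun f p / cFun μ (p 2);
     0, 0, 0]

/-- The tensor field `h = (1/2) ℒ_ξ φ` applied to a vector field `X`, with `ξ = e₃`:
`(hX)(p) = (1/2)([e₃, φX](p) - φ(p)·[e₃, X](p))`. -/
noncomputable def hOp (μ f r : ℝ → ℝ) (X : (Fin 3 → ℝ) → (Fin 3 → ℝ)) :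
    (Fin 3 → ℝ) → (Fin 3 → ℝ) :=
  fun p => (1 / 2 : ℝ) •
    (VectorField.lieBracket ℝ (e3 μ f r) (fun q => phi μ f r q *ᵥ X q) p
      - phi μ f r p *ᵥ VectorField.lieBracket ℝ (e3 μ f r) X p)

/-- The tensor field `h' = h ∘ φ` applied to a vector field `X`. -/
noncomputable def h'Op (μ f r : ℝ → ℝ) (X : (Fin 3 → ℝ) → (Fin 3 → ℝ)) :
    (Fin 3 → ℝ) → (Fin 3 → ℝ) :=
  hOp μ f r (fun q => phi μ f r q *ᵥ X q)

lemma hasDerivAt_lam {z : ℝ} (hz : z < -1) :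
    HasDerivAt lam (1 / (2 * Real.sqrt (-1 - z)) * (-1)) z := by
  have h : (-1 - z) ≠ 0 := ne_of_gt (by linarith)
  have h1 : HasDerivAt (fun z : ℝ => -1 - z) (-1) z := by
    simpa using (hasDerivAt_id z).const_sub (-1 : ℝ)
  exact (Real.hasDerivAt_sqrt h).comp z h1

lemma fderiv_e3 (μ f r : ℝ → ℝ)
    (hμ : ContDiff ℝ (⊤ : ℕ∞) μ) (hf : ContDiff ℝ (⊤ : ℕ∞) f) (hr : ContDiff ℝ (⊤ : ℕ∞) r)
    (p : Fin 3 → ℝ) (hp : p 2 < -1) :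
    fderiv ℝ (e3 μ f r) p ![1,0,0] = ![1 + lam (p 2), 0, 0] ∧
    fderiv ℝ (e3 μ f r) p ![0,1,0] = ![0, 1 - lam (p 2), 0] := by
  set dl := 1 / (2 * Real.sqrt (-1 - p 2)) * (-1) with hdl
  have hproj0 : HasFDerivAt (fun q : Fin 3 → ℝ => q 0)
      (ContinuousLinearMap.proj (R := ℝ) (φ := fun _ : Fin 3 => ℝ) 0) p := hasFDerivAt_apply 0 p
  have hproj1 : HasFDerivAt (fun q : Fin 3 → ℝ => q 1)
      (ContinuousLinearMap.proj (R := ℝ) (φ := fun _ : Fin 3 => ℝ) 1) p := hasFDerivAt_apply 1 p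
  have hproj2 : HasFDerivAt (fun q : Fin 3 → ℝ => q 2)
      (ContinuousLinearMap.proj (R := ℝ) (φ := fun _ : Fin 3 => ℝ) 2) p := hasFDerivAt_apply 2 p
  have hlamq : HasFDerivAt (fun q : Fin 3 → ℝ => lam (q 2))
      (dl • ContinuousLinearMap.proj (R := ℝ) (φ := fun _ : Fin 3 => ℝ) 2) p :=
    HasDerivAt.comp_hasFDerivAt (h₂ := lam) (f := fun q : Fin 3 → ℝ => q 2) p (hasDerivAt_lam hp) hproj2
  have hfq : HasFDerivAt (fun q : Fin 3 → ℝ => f (q 2))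
      (deriv f (p 2) • ContinuousLinearMap.proj (R := ℝ) (φ := fun _ : Fin 3 => ℝ) 2) p :=
    ((hf.differentiable (by simp) (p 2)).hasDerivAt).comp_hasFDerivAt p hproj2
  have hrq : HasFDerivAt (fun q : Fin 3 → ℝ => r (q 2))
      (deriv r (p 2) • ContinuousLinearMap.proj (R := ℝ) (φ := fun _ : Fin 3 => ℝ) 2) p :=
    ((hr.differentiable (by simp) (p 2)).hasDerivAt).comp_hasFDerivAt p hproj2
  have hcdiff : DifferentiableAt ℝ (fun z => -cFun μ z) (p 2) := by
    have := hμ.differentiable (by simp)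
    unfold cFun
    exact (((differentiableAt_id.const_add 1).const_mul 2).mul ((this (p 2)).add_const 2)).neg
  have hcq : HasFDerivAt (fun q : Fin 3 → ℝ => -cFun μ (q 2))
      (deriv (fun z => -cFun μ z) (p 2) • ContinuousLinearMap.proj (R := ℝ) (φ := fun _ : Fin 3 => ℝ) 2) p :=
    HasDerivAt.comp_hasFDerivAt (h₂ := fun z => -cFun μ z) (f := fun q : Fin 3 → ℝ => q 2) p hcdiff.hasDerivAt hproj2
  have ha : HasFDerivAt (fun q => aFun f q)
      ((p 0 • (dl • ContinuousLinearMap.proj (R := ℝ) (φ := fun _ : Fin 3 => ℝ) 2) +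
        (1 + lam (p 2)) • ContinuousLinearMap.proj (R := ℝ) (φ := fun _ : Fin 3 => ℝ) 0) +
        deriv f (p 2) • ContinuousLinearMap.proj (R := ℝ) (φ := fun _ : Fin 3 => ℝ) 2) p := by
    exact (hproj0.mul (hlamq.const_add 1)).add hfq
  have hb : HasFDerivAt (fun q => bFun r q)
      ((p 1 • ((-(dl • ContinuousLinearMap.proj (R := ℝ) (φ := fun _ : Fin 3 => ℝ) 2))) +
        (1 - lam (p 2)) • ContinuousLinearMap.proj (R := ℝ) (φ := fun _ : Fin 3 => ℝ) 1) +
        deriv r (p 2) • ContinuousLinearMap.proj (R := ℝ) (φ := fun _ : Fin 3 => ℝ) 2) p := by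
    have : HasFDerivAt (fun q : Fin 3 → ℝ => 1 - lam (q 2))
        ((-(dl • ContinuousLinearMap.proj (R := ℝ) (φ := fun _ : Fin 3 => ℝ) 2))) p := by
      exact hlamq.const_sub 1
    exact (hproj1.mul this).add hrq
  set La := (p 0 • (dl • ContinuousLinearMap.proj (R := ℝ) (φ := fun _ : Fin 3 => ℝ) 2) +
        (1 + lam (p 2)) • ContinuousLinearMap.proj (R := ℝ) (φ := fun _ : Fin 3 => ℝ) 0) +
        deriv f (p 2) • ContinuousLinearMap.proj (R := ℝ) (φ := fun _ : Fin 3 => ℝ) 2 with hLa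
  set Lb := (p 1 • ((-(dl • ContinuousLinearMap.proj (R := ℝ) (φ := fun _ : Fin 3 => ℝ) 2))) +
        (1 - lam (p 2)) • ContinuousLinearMap.proj (R := ℝ) (φ := fun _ : Fin 3 => ℝ) 1) +
        deriv r (p 2) • ContinuousLinearMap.proj (R := ℝ) (φ := fun _ : Fin 3 => ℝ) 2 with hLb
  set Lc := deriv (fun z => -cFun μ z) (p 2) • ContinuousLinearMap.proj (R := ℝ) (φ := fun _ : Fin 3 => ℝ) 2 with hLc
  have hE : HasFDerivAt (e3 μ f r) (ContinuousLinearMap.pi fun i => ![La, Lb, Lc] i) p := by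
    apply hasFDerivAt_pi''
    intro i
    fin_cases i <;>
      simp only [e3, Matrix.cons_val_zero, Matrix.cons_val_one, Matrix.head_cons,
        Matrix.cons_val_two, Matrix.tail_cons, ContinuousLinearMap.proj_pi, Fin.isValue] <;>
      [exact ha; exact hb; exact hcq]
  rw [hE.fderiv]
  constructor <;> funext i <;> fin_cases i <;>
    simp [hLa, hLb, hLc, ContinuousLinearMap.pi_apply, ContinuousLinearMap.proj_apply]

lemma phi_mulVec (μ f r : ℝ → ℝ) (q : Fin 3 → ℝ) (u v : ℝ) :
    phi μ f r q *ᵥ ![u, v, 0] = ![-v, u, 0] := by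
  funext i
  fin_cases i <;>
    simp [phi, Matrix.mulVec, dotProduct, Fin.sum_univ_three]

lemma bracket_const (μ f r : ℝ → ℝ) (p w : Fin 3 → ℝ) :
    VectorField.lieBracket ℝ (e3 μ f r) (fun _ => w) p = -(fderiv ℝ (e3 μ f r) p w) := by
  simp [VectorField.lieBracket]

lemma hOp_const (μ f r : ℝ → ℝ)
    (hμ : ContDiff ℝ (⊤ : ℕ∞) μ) (hf : ContDiff ℝ (⊤ : ℕ∞) f) (hr : ContDiff ℝ (⊤ : ℕ∞) r)
    (p : Fin 3 → ℝ) (hp : p 2 < -1) (u v : ℝ) :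
    hOp μ f r (fun _ => ![u, v, 0]) p = ![v * lam (p 2), u * lam (p 2), 0] := by
  obtain ⟨hD1, hD2⟩ := fderiv_e3 μ f r hμ hf hr p hp
  have hlin : ∀ u v : ℝ, fderiv ℝ (e3 μ f r) p ![u, v, 0] =
      ![u * (1 + lam (p 2)), v * (1 - lam (p 2)), 0] := by
    intro u v
    have huv : (![u, v, 0] : Fin 3 → ℝ) = u • ![1,0,0] + v • ![0,1,0] := by
      funext i; fin_cases i <;> simp
    rw [huv, map_add, _root_.map_smul, _root_.map_smul, hD1, hD2]
    funext i; fin_cases i <;> simp [mul_comm]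
  have hin : (fun q => phi μ f r q *ᵥ (fun _ => ![u, v, 0] : (Fin 3 → ℝ) → (Fin 3 → ℝ)) q)
      = fun _ => (![-v, u, 0] : Fin 3 → ℝ) := by
    funext q
    exact phi_mulVec μ f r q u v
  simp only [hOp, hin, bracket_const, hlin]
  have hneg : (-(![u * (1 + lam (p 2)), v * (1 - lam (p 2)), 0]) : Fin 3 → ℝ)
      = ![-(u * (1 + lam (p 2))), -(v * (1 - lam (p 2))), 0] := by
    funext i; fin_cases i <;> simp
  rw [hneg, phi_mulVec]
  funext i; fin_cases i <;>
    simp [Matrix.smul_cons, Matrix.smul_empty] <;> ring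

theorem stmt_13 (μ f r : ℝ → ℝ)
    (hμ : ContDiff ℝ (⊤ : ℕ∞) μ) (hf : ContDiff ℝ (⊤ : ℕ∞) f) (hr : ContDiff ℝ (⊤ : ℕ∞) r)
    (hμ2 : ∀ z : ℝ, z < -1 → μ z ≠ -2) :
    ∀ p : Fin 3 → ℝ, p 2 < -1 →
      hOp μ f r e1 p = lam (p 2) • e2 p ∧
      hOp μ f r e2 p = lam (p 2) • e1 p ∧
      h'Op μ f r e1 p = lam (p 2) • e1 p ∧
      h'Op μ f r e2 p = -lam (p 2) • e2 p := by
  intro p hp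
  have he1 : e1 = fun _ => (![1, 0, 0] : Fin 3 → ℝ) := rfl
  have he2 : e2 = fun _ => (![0, 1, 0] : Fin 3 → ℝ) := rfl
  have hp1 : (fun q => phi μ f r q *ᵥ e1 q) = fun _ => (![0, 1, 0] : Fin 3 → ℝ) := by
    funext q; show phi μ f r q *ᵥ ![1, 0, 0] = _
    rw [phi_mulVec]; funext i; fin_cases i <;> simp
  have hp2 : (fun q => phi μ f r q *ᵥ e2 q) = fun _ => (![-1, 0, 0] : Fin 3 → ℝ) := by
    funext q; show phi μ f r q *ᵥ ![0, 1, 0] = _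
    rw [phi_mulVec]
  refine ⟨?_, ?_, ?_, ?_⟩
  · rw [he1, hOp_const μ f r hμ hf hr p hp]
    funext i; fin_cases i <;> simp [e2]
  · rw [he2, hOp_const μ f r hμ hf hr p hp]
    funext i; fin_cases i <;> simp [e1]
  · rw [h'Op, hp1, hOp_const μ f r hμ hf hr p hp]
    funext i; fin_cases i <;> simp [e1]
  · rw [h'Op, hp2, hOp_const μ f r hμ hf hr p hp]
    funext i; fin_cases i <;> simp [e2]
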